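/- arXiv:2412.02954 — 3 statements merged into one kernel-verified Lean document; each statement's English description precedes it below -/
import Mathlib

section
/- Let u : {x>0} → ℝ² with G(x) := ∫_ℝ [½(|∂_y u|² − |∂_x u|²) + W(u(x,y))] dy ≡ C₁ constant. Assume (i) ∫_{0<x<R} (½|∇u|² + W(u)) dz ≤ σR + C for all R > 0, (ii) for every x > 0 the slice y ↦ u(x,y) has 1D energy ∫_ℝ (½|∂_y u|² + W(u)) dy ≥ σ, and (iii) ∫_{x>0} |∂_x u|² dz ≤ C. Then C₁ = σ. -/
open MeasureTheory intervalIntegral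

/-! Since `G = e₁ - ½|∂ₓu|²` is constant, integrating over `0 < x < R` gives
`C₁ R = ∫ e₁ - ½ ∫ |∂ₓu|²`. The energy bound makes the right side at most `σ R + C`, and the
slice bound `e₁ ≥ σ` with the bound on `∫ |∂ₓu|²` makes it at least `σ R - C / 2`. Both
estimates hold for every `R`, so dividing by `R → ∞` forces `C₁ = σ`. -/

theorem le_of_forall_pos_mul_le_mul_add {a b C : ℝ} (h : ∀ R > 0, a * R ≤ b * R + C) :
    a ≤ b := by
  by_contra! hba
  have hgap : (a - b) * ((|C| + 1) / (a - b)) = |C| + 1 :=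
    mul_div_cancel₀ _ (sub_pos.2 hba).ne'
  have := h ((|C| + 1) / (a - b)) (div_pos (by positivity) (sub_pos.2 hba))
  linarith [le_abs_self C]

theorem stmt8_general (e₁ px2 : ℝ → ℝ) (C₁ σ C : ℝ)
    (hpx2 : ∀ x, 0 ≤ px2 x)
    (hInt : ∀ R : ℝ, 0 < R → IntervalIntegrable e₁ volume 0 R ∧
      IntervalIntegrable px2 volume 0 R)
    (hG : ∀ x : ℝ, 0 < x → e₁ x - px2 x / 2 = C₁)
    (htot : ∀ R : ℝ, 0 < R → (∫ x in (0:ℝ)..R, (e₁ x + px2 x / 2)) ≤ σ * R + C)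
    (hslice : ∀ x : ℝ, 0 < x → σ ≤ e₁ x)
    (hpx : ∀ R : ℝ, 0 < R → (∫ x in (0:ℝ)..R, px2 x) ≤ C) :
    C₁ = σ := by
  have hupper : ∀ R > 0, C₁ * R ≤ σ * R + C := by
    intro R hR
    have hmono : ∫ _ in (0:ℝ)..R, C₁ ≤ ∫ x in (0:ℝ)..R, (e₁ x + px2 x / 2) :=
      integral_mono_on_of_le_Ioo hR.le intervalIntegrable_const
        ((hInt R hR).1.add ((hInt R hR).2.div_const 2))
        fun x hx => by linarith [hG x hx.1, hpx2 x]
    rw [intervalIntegral.integral_const, smul_eq_mul, sub_zero, mul_comm] at hmono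
    exact hmono.trans (htot R hR)
  have hlower : ∀ R > 0, σ * R ≤ C₁ * R + C / 2 := by
    intro R hR
    have hmono : ∫ _ in (0:ℝ)..R, σ ≤ ∫ x in (0:ℝ)..R, (C₁ + px2 x / 2) :=
      integral_mono_on_of_le_Ioo hR.le intervalIntegrable_const
        (intervalIntegrable_const.add ((hInt R hR).2.div_const 2))
        fun x hx => by linarith [hG x hx.1, hslice x hx.1]
    rw [integral_add intervalIntegrable_const ((hInt R hR).2.div_const 2),
      intervalIntegral.integral_div, intervalIntegral.integral_const,
      intervalIntegral.integral_const, smul_eq_mul, smul_eq_mul, sub_zero] at hmono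
    linarith [hpx R hR]
  exact le_antisymm (le_of_forall_pos_mul_le_mul_add hupper)
    (le_of_forall_pos_mul_le_mul_add hlower)

/-- If `G(x) = e₁(x) − ½‖∂_x u(x,·)‖² ≡ C₁` where `e₁(x)` is the 1D energy of the slice,
the total energy on `{0 < x < R}` is at most `σR + C`, each slice energy is at least `σ`,
and the horizontal deformation `∫ |∂_x u|²` is at most `C`, then `C₁ = σ`. -/
theorem stmt8 (e₁ px2 : ℝ → ℝ) (C₁ σ C : ℝ) (hσ : 0 < σ) (hC : 0 ≤ C)
    (hpx2 : ∀ x, 0 ≤ px2 x)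
    (hInt : ∀ R : ℝ, 0 < R → IntervalIntegrable e₁ volume 0 R ∧
      IntervalIntegrable px2 volume 0 R)
    (hG : ∀ x : ℝ, 0 < x → e₁ x - px2 x / 2 = C₁)
    (htot : ∀ R : ℝ, 0 < R → (∫ x in (0:ℝ)..R, (e₁ x + px2 x / 2)) ≤ σ * R + C)
    (hslice : ∀ x : ℝ, 0 < x → σ ≤ e₁ x)
    (hpx : ∀ R : ℝ, 0 < R → (∫ x in (0:ℝ)..R, px2 x) ≤ C) :
    C₁ = σ :=
  stmt8_general e₁ px2 C₁ σ C hpx2 hInt hG htot hslice hpx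
end

section
/- Let d : (R₀,∞) → [0,∞) be continuous with d(x_n) ≥ ε₀ along some sequence x_n → ∞, and suppose: (a) the set {x : d(x) > ε₀/10} has finite measure; (b) on any interval (x_R, x̄_R) where ε₀/10 ≤ d ≤ ε₀, one has d/dx [d(x)²] ≤ F(x) with ∫_{x_R}^{x̄_R} F(x) dx → 0 as x_R → ∞. Then one obtains a contradiction: for x_R large with d(x_R) ≤ ε₀/10 and x̄_R = inf{x > x_R : d(x) = ε₀}, the fundamental theorem of calculus gives (99/100)ε₀² = d(x̄_R)² − d(x_R)² ≤ ∫_{x_R}^{x̄_R} F → 0, which is impossible. Hence if such F exists with globally integrable total mass, then d(x) → 0 as x → ∞. -/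
/-!
Instead of a barrier argument at the level `ε₀`, one integrates the differential inequality
directly: for `a ≤ x` far out, `d(x)² ≤ d(a)² + ∫ₐˣ F`, and the integral is uniformly small
because `F` is integrable. Since `{d > ε/2}` has finite measure, `d(a) ≤ ε/2` for
arbitrarily large `a`, and then `d(x) < ε` for every `x ≥ a`.
-/

open MeasureTheory Filter

open Set in
theorem frequently_atTop_le_of_volume_lt_top {f : ℝ → ℝ} {R₀ ε : ℝ}
    (h : volume {x | R₀ < x ∧ ε < f x} < ⊤) : ∃ᶠ x in atTop, f x ≤ ε := by
  rw [frequently_atTop]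
  intro R
  by_contra! hR
  have hsub : Ioi (max R R₀) ⊆ {x | R₀ < x ∧ ε < f x} := fun x hx =>
    ⟨(le_max_right R R₀).trans_lt hx, hR x ((le_max_left R R₀).trans hx.le)⟩
  have := (measure_mono hsub).trans_lt h
  simp at this

open Set in
theorem eventually_forall_intervalIntegral_lt {F : ℝ → ℝ} {R₀ : ℝ}
    (hF : IntegrableOn F (Ioi R₀)) {δ : ℝ} (hδ : 0 < δ) :
    ∀ᶠ a in atTop, ∀ b, a ≤ b → ∫ t in a..b, F t < δ := by
  have htail : ∀ᶠ R in atTop, |∫ t in Ioi R, F t| < δ / 2 :=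
    (tendsto_integral_Ioi_zero tendsto_id).abs.eventually
      (eventually_lt_nhds (by simpa using half_pos hδ))
  obtain ⟨R, hR⟩ := eventually_atTop.1 (htail.and (eventually_ge_atTop R₀))
  filter_upwards [eventually_ge_atTop R] with a ha b hab
  rw [← intervalIntegral.integral_Ioi_sub_Ioi (hF.mono_set (Ioi_subset_Ioi (hR a ha).2)) hab]
  linarith [(abs_lt.1 (hR a ha).1).2, (abs_lt.1 (hR b (ha.trans hab)).1).1]

theorem stmt13_general (d F D : ℝ → ℝ) (R₀ : ℝ)
    (hd0 : ∀ x, 0 ≤ d x)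
    (hderiv : ∀ x ∈ Set.Ioi R₀, HasDerivAt (fun t => d t ^ 2) (D x) x)
    (hDF : ∀ x ∈ Set.Ioi R₀, D x ≤ F x)
    (hFint : IntegrableOn F (Set.Ioi R₀))
    (hsmall : ∀ ε : ℝ, 0 < ε → volume {x : ℝ | R₀ < x ∧ ε < d x} < ⊤) :
    Tendsto d atTop (nhds 0) := by
  refine tendsto_order.2 ⟨fun δ hδ => .of_forall fun x => hδ.trans_le (hd0 x), fun ε hε => ?_⟩
  obtain ⟨a, ⟨haR₀, hint⟩, hda⟩ :=
    (((eventually_gt_atTop R₀).and (eventually_forall_intervalIntegral_lt hFint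
      (by positivity : (0 : ℝ) < ε ^ 2 / 2))).and_frequently
      (frequently_atTop_le_of_volume_lt_top (hsmall (ε / 2) (by positivity)))).exists
  filter_upwards [eventually_ge_atTop a] with x hax
  have hIcc : Set.Icc a x ⊆ Set.Ioi R₀ := fun t ht => haR₀.trans_le ht.1
  have hftc : d x ^ 2 - d a ^ 2 ≤ ∫ t in a..x, F t :=
    intervalIntegral.sub_le_integral_of_hasDeriv_right_of_le hax
      (HasDerivAt.continuousOn fun t ht => hderiv t (hIcc ht))
      (fun t ht => (hderiv t (hIcc (Set.Ioo_subset_Icc_self ht))).hasDerivWithinAt)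
      (hFint.mono_set hIcc) (fun t ht => hDF t (hIcc (Set.Ioo_subset_Icc_self ht)))
  nlinarith [hint x hax, hd0 a, hd0 x]

/-- Barrier argument for the modulation distance: if `d ≥ 0` is continuous on `(R₀,∞)`,
the set where `d` exceeds any fixed `ε > 0` has finite measure, and `x ↦ d(x)²` has a
derivative bounded by a function `F` that is integrable on `(R₀,∞)`, then `d(x) → 0`
as `x → ∞`. -/
theorem stmt13 (d F D : ℝ → ℝ) (R₀ : ℝ)
    (hd0 : ∀ x, 0 ≤ d x)
    (hdcont : ContinuousOn d (Set.Ioi R₀))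
    (hderiv : ∀ x ∈ Set.Ioi R₀, HasDerivAt (fun t => d t ^ 2) (D x) x)
    (hDF : ∀ x ∈ Set.Ioi R₀, D x ≤ F x)
    (hFint : IntegrableOn F (Set.Ioi R₀))
    (hsmall : ∀ ε : ℝ, 0 < ε → volume {x : ℝ | R₀ < x ∧ ε < d x} < ⊤) :
    Tendsto d atTop (nhds 0) :=
  stmt13_general d F D R₀ hd0 hderiv hDF hFint hsmall
end

section
/- For each fixed C, k > 0 there is M such that for all R sufficiently large, ∫_{R/2}^{R} e^{−2k(√(R² + C²R − x²) − C√x)} dx ≤ M. -/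
open MeasureTheory intervalIntegral Real

/-- Uniform bound for the tail integral in the triangle-vs-disk energy comparison:
for fixed `C, k > 0` there are `M` and `R*` such that for all `R ≥ R*`,
`∫_{R/2}^{R} e^{−2k(√(R² + C²R − x²) − C√x)} dx ≤ M`. -/
theorem stmt14 (C k : ℝ) (hC : 0 < C) (hk : 0 < k) :
    ∃ M Rstar : ℝ, 0 < M ∧ 0 < Rstar ∧ ∀ R ≥ Rstar,
      (∫ x in (R / 2)..R,
        Real.exp (-2 * k * (Real.sqrt (R ^ 2 + C ^ 2 * R - x ^ 2) - C * Real.sqrt x)))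
      ≤ M := by
  refine ⟨1 / k, max (4 * C ^ 2) 1, by positivity, by positivity, ?_⟩
  intro R hR
  have hR1 : (1 : ℝ) ≤ R := le_trans (le_max_right _ _) hR
  have hR4 : 4 * C ^ 2 ≤ R := le_trans (le_max_left _ _) hR
  have hR0 : 0 < R := by linarith
  have hab : R / 2 ≤ R := by linarith
  set sqR := Real.sqrt R with hsqR
  have hsqR2 : sqR ^ 2 = R := Real.sq_sqrt hR0.le
  have hsqRpos : 0 < sqR := Real.sqrt_pos.mpr hR0
  have hsqRC : 2 * C ≤ sqR := by
    have := Real.sqrt_le_sqrt hR4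
    have h4 : Real.sqrt (4 * C ^ 2) = 2 * C := by
      rw [show (4 : ℝ) * C ^ 2 = (2 * C) ^ 2 by ring]
      exact Real.sqrt_sq (by positivity)
    linarith [h4 ▸ this]
  -- pointwise bound
  have key : ∀ x ∈ Set.Icc (R / 2) R,
      Real.exp (-2 * k * (Real.sqrt (R ^ 2 + C ^ 2 * R - x ^ 2) - C * Real.sqrt x))
        ≤ Real.exp (k * x - k * R) := by
    intro x hx
    obtain ⟨hx1, hx2⟩ := hx
    have hx0 : 0 ≤ x := by linarith
    set t := R - x with ht
    have ht0 : 0 ≤ t := by simp [ht]; linarith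
    have htR : t ≤ R / 2 := by simp [ht]; linarith
    -- step a
    have ha : Real.sqrt (R * (C ^ 2 + t)) ≤ Real.sqrt (R ^ 2 + C ^ 2 * R - x ^ 2) := by
      apply Real.sqrt_le_sqrt
      nlinarith
    -- step b
    have hb : Real.sqrt (R * (C ^ 2 + t)) = sqR * Real.sqrt (C ^ 2 + t) := by
      rw [Real.sqrt_mul hR0.le]
    -- step c
    have hc : C + t / (2 * sqR) ≤ Real.sqrt (C ^ 2 + t) := by
      rw [show Real.sqrt (C ^ 2 + t) = Real.sqrt (C ^ 2 + t) from rfl]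
      apply (Real.le_sqrt' (by positivity)).mpr
      · have h1 : (C + t / (2 * sqR)) ^ 2
            = C ^ 2 + C * t / sqR + t ^ 2 / (4 * sqR ^ 2) := by
          field_simp; ring
        rw [h1, hsqR2]
        have h2 : C * t / sqR ≤ t / 2 := by
          rw [div_le_iff₀ hsqRpos]
          nlinarith
        have h3 : t ^ 2 / (4 * R) ≤ t / 4 := by
          rw [div_le_div_iff₀ (by positivity) (by norm_num : (0:ℝ) < 4)]
          nlinarith
        linarith
    -- step d
    have hd : C * Real.sqrt x ≤ C * sqR := by
      apply mul_le_mul_of_nonneg_left (Real.sqrt_le_sqrt hx2) hC.le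
    -- combine
    have hcomb : t ≤ 2 * (Real.sqrt (R ^ 2 + C ^ 2 * R - x ^ 2) - C * Real.sqrt x) := by
      have h5 : sqR * (C + t / (2 * sqR)) ≤ sqR * Real.sqrt (C ^ 2 + t) :=
        mul_le_mul_of_nonneg_left hc hsqRpos.le
      have h6 : sqR * (C + t / (2 * sqR)) = C * sqR + t / 2 := by
        field_simp
      nlinarith [ha, hb, hd]
    apply Real.exp_le_exp.mpr
    nlinarith
  -- integrability
  have hcont : Continuous fun x : ℝ =>
      Real.exp (-2 * k * (Real.sqrt (R ^ 2 + C ^ 2 * R - x ^ 2) - C * Real.sqrt x)) := by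
    fun_prop
  have hint1 : IntervalIntegrable (fun x : ℝ =>
      Real.exp (-2 * k * (Real.sqrt (R ^ 2 + C ^ 2 * R - x ^ 2) - C * Real.sqrt x)))
      volume (R / 2) R := hcont.intervalIntegrable _ _
  have hint2 : IntervalIntegrable (fun x : ℝ => Real.exp (k * x - k * R))
      volume (R / 2) R := (by fun_prop : Continuous fun x : ℝ =>
        Real.exp (k * x - k * R)).intervalIntegrable _ _
  have hmono := intervalIntegral.integral_mono_on hab hint1 hint2 key
  refine le_trans hmono ?_
  -- compute the upper integral
  have hderiv : ∀ x ∈ Set.uIcc (R / 2) R,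
      HasDerivAt (fun x => Real.exp (k * x - k * R) / k)
        (Real.exp (k * x - k * R)) x := by
    intro x _
    have h1 : HasDerivAt (fun x : ℝ => k * x - k * R) k x := by
      simpa using ((hasDerivAt_id x).const_mul k).sub_const (k * R)
    have h2 := (h1.exp).div_const k
    simpa [mul_comm, mul_div_assoc, hk.ne'] using h2
  have hval := intervalIntegral.integral_eq_sub_of_hasDerivAt hderiv hint2
  rw [hval]
  have : Real.exp (k * R - k * R) = 1 := by simp
  rw [this]
  have hpos : 0 < Real.exp (k * (R / 2) - k * R) := Real.exp_pos _
  rw [div_sub_div_same, div_le_div_iff₀ hk hk]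
  nlinarith
end
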